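/- arXiv:0704.0342 — 8 statements merged into one kernel-verified Lean document; each statement's English description precedes it below -/
import Mathlib

section
/- Let f : [0,1] → ℝ be continuous and smooth on (0,1). Suppose that for every 0 < M < 1 the composite f ∘ c_M is C^∞ on ℝ, where c_M(t) = (1 − α_ε(|t|))·β_M(t) + α_ε(|t|) with α_ε a smooth braking function (0 on (−∞,ε], 1 on [1−ε,∞)) and β_M(t) = −Mt for t ≤ 0, β_M(t) = t for t > 0. Then for every n ≥ 1, lim_{t→0⁺} f⁽ⁿ⁾(t) = 0. -/
open Set Filter

/-- If `f` is continuous on `[0,1]`, smooth on `(0,1)`, and `f ∘ c_M` is C^∞ on `ℝ` for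
every `0 < M < 1` (with `c_M(t) = (1 - α_ε(|t|))·β_M(t) + α_ε(|t|)`), then every
derivative of `f` tends to `0` as `t → 0⁺`. -/
theorem zero_derivative_of_comp_smooth
    (ε : ℝ) (hε : ε ∈ Ioo (0 : ℝ) (1 / 2))
    (α : ℝ → ℝ) (hαs : ContDiff ℝ (⊤ : ℕ∞) α)
    (hα0 : ∀ t, t ≤ ε → α t = 0) (hα1 : ∀ t, 1 - ε ≤ t → α t = 1)
    (f : ℝ → ℝ)
    (hfc : ContinuousOn f (Icc 0 1))
    (hf : ContDiffOn ℝ (⊤ : ℕ∞) f (Ioo 0 1))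
    (h : ∀ M ∈ Ioo (0 : ℝ) 1,
      ContDiff ℝ (⊤ : ℕ∞)
        (fun t => f ((1 - α |t|) * (if t ≤ 0 then -M * t else t) + α |t|))) :
    ∀ n : ℕ, 1 ≤ n → Tendsto (iteratedDeriv n f) (nhdsWithin 0 (Ioi 0)) (nhds 0) := by
  intro n hn
  set g : ℝ → ℝ :=
    fun t => f ((1 - α |t|) * (if t ≤ 0 then -(1/2 : ℝ) * t else t) + α |t|) with hg_def
  have hg : ContDiff ℝ (⊤ : ℕ∞) g := h (1/2) ⟨by norm_num, by norm_num⟩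
  have hgn : ContDiff ℝ (n : ℕ∞) g := hg.of_le (by exact_mod_cast le_top)
  set L : ℝ := iteratedDeriv n g 0 with hL_def
  have hcont : Continuous (iteratedDeriv n g) :=
    hg.continuous_iteratedDeriv n (by exact_mod_cast le_top)
  -- g = f on Ioo 0 ε
  have hEq1 : EqOn g f (Ioo 0 ε) := by
    intro t ht
    have ht0 : 0 < t := ht.1
    have : α |t| = 0 := by
      rw [abs_of_pos ht0]; exact hα0 t ht.2.le
    simp [hg_def, this, not_le.mpr ht0]
  -- (fun s => g (-2 * s)) = f on Ioo 0 (ε/2)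
  have hEq2 : EqOn (fun s => g ((-2 : ℝ) * s)) f (Ioo 0 (ε/2)) := by
    intro s hs
    have hs0 : 0 < s := hs.1
    have hneg : (-2 : ℝ) * s < 0 := by linarith
    have habs : |(-2 : ℝ) * s| = 2 * s := by
      rw [abs_of_neg hneg]; ring
    have hα : α |(-2 : ℝ) * s| = 0 := by
      rw [habs]; exact hα0 _ (by linarith [hs.2])
    simp only [hg_def, hα, if_pos hneg.le, sub_zero, add_zero, one_mul]
    congr 1
    ring
  -- iteratedDeriv of g(-2 s)
  have hchain : iteratedDeriv n (fun s => g ((-2 : ℝ) * s)) =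
      fun s => (-2 : ℝ) ^ n * iteratedDeriv n g ((-2 : ℝ) * s) :=
    iteratedDeriv_comp_const_mul hgn (-2)
  -- limits
  have hmem1 : Ioo (0:ℝ) ε ∈ nhdsWithin (0:ℝ) (Ioi 0) :=
    Ioo_mem_nhdsGT_of_mem ⟨le_refl _, hε.1⟩
  have hmem2 : Ioo (0:ℝ) (ε/2) ∈ nhdsWithin (0:ℝ) (Ioi 0) :=
    Ioo_mem_nhdsGT_of_mem ⟨le_refl _, by linarith [hε.1]⟩
  have h1 : Tendsto (iteratedDeriv n f) (nhdsWithin 0 (Ioi 0)) (nhds L) := by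
    refine ((hcont.tendsto 0).mono_left nhdsWithin_le_nhds).congr' ?_
    filter_upwards [hmem1] with t ht
    exact (hEq1.iteratedDeriv_of_isOpen isOpen_Ioo n) ht
  have h2 : Tendsto (iteratedDeriv n f) (nhdsWithin 0 (Ioi 0))
      (nhds ((-2 : ℝ) ^ n * L)) := by
    have hlim : Tendsto (fun s => (-2 : ℝ) ^ n * iteratedDeriv n g ((-2 : ℝ) * s))
        (nhdsWithin 0 (Ioi 0)) (nhds ((-2 : ℝ) ^ n * L)) := by
      have hto : Tendsto (fun s : ℝ => (-2 : ℝ) * s) (nhdsWithin 0 (Ioi 0)) (nhds 0) := by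
        have ht : Tendsto (fun s : ℝ => (-2 : ℝ) * s) (nhds 0) (nhds ((-2 : ℝ) * 0)) :=
          (continuous_const.mul continuous_id).tendsto (0 : ℝ)
        simpa using ht.mono_left nhdsWithin_le_nhds
      exact ((hcont.tendsto 0).comp hto).const_mul _
    refine hlim.congr' ?_
    filter_upwards [hmem2] with s hs
    have := (hEq2.iteratedDeriv_of_isOpen isOpen_Ioo n) hs
    rw [← this, hchain]
  have hLeq : L = (-2 : ℝ) ^ n * L := tendsto_nhds_unique h1 h2
  have hL0 : L = 0 := by
    have hfactor : ((-2 : ℝ) ^ n - 1) * L = 0 := by linear_combination -hLeq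
    rcases mul_eq_zero.mp hfactor with h' | h'
    · exfalso
      have h2n : ((-2 : ℝ)) ^ n = 1 := by linarith
      have habs : (2 : ℝ) ^ n = 1 := by
        have := congrArg abs h2n
        simpa [abs_pow] using this
      have hge : (2 : ℝ) ^ 1 ≤ 2 ^ n := pow_le_pow_right₀ (by norm_num) hn
      rw [habs] at hge
      norm_num at hge
    · exact h'
  rw [hL0] at h1
  exact h1
end

section
/- Let α : ℝ → ℝ be a smooth function with α(t) = −1 for t < −3/4, α(t) = t for −1/4 < t < 1/4, α(t) = 1 for t > 3/4, and define c(t) = 1 − |α(t)|. Then for every smooth function f : ℝ → ℝ that is locally constant near 1 (i.e. constant on a neighborhood of every point t with c(t)=1), the composite f ∘ c is C^∞ on ℝ, even though c itself is not differentiable at t = 0. -/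
open Set

/-- With `α` smooth, `α = -1` below `-3/4`, `α t = t` on `(-1/4, 1/4)`, `α = 1` above
`3/4`, and `c t = 1 - |α t|`: for every smooth `f : ℝ → ℝ` constant on a neighborhood of
the value `1`, the composite `f ∘ c` is C^∞ on `ℝ`, even though `c` is not differentiable
at `t = 0`. -/
theorem structure_curve_despite_nonsmooth
    (α : ℝ → ℝ) (hαs : ContDiff ℝ (⊤ : ℕ∞) α)
    (hα1 : ∀ t, t < -(3 / 4 : ℝ) → α t = -1)
    (hαid : ∀ t ∈ Ioo (-(1 / 4) : ℝ) (1 / 4), α t = t)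
    (hα2 : ∀ t, (3 / 4 : ℝ) < t → α t = 1)
    (c : ℝ → ℝ) (hc : ∀ t, c t = 1 - |α t|) :
    (∀ f : ℝ → ℝ, ContDiff ℝ (⊤ : ℕ∞) f →
      (∃ δ > 0, ∀ x ∈ Metric.ball (1 : ℝ) δ, f x = f 1) →
      ContDiff ℝ (⊤ : ℕ∞) (f ∘ c)) ∧
    ¬ DifferentiableAt ℝ c 0 := by
  have hce : c = fun t => 1 - |α t| := funext hc
  have hcc : Continuous c := by
    rw [hce]; exact continuous_const.sub hαs.continuous.abs
  constructor
  · rintro f hf ⟨δ, hδ, hball⟩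
    rw [contDiff_iff_contDiffAt]
    intro t
    rcases lt_trichotomy (α t) 0 with h | h | h
    · have hev : ∀ᶠ s in nhds t, α s < 0 :=
        (hαs.continuous.tendsto t).eventually (eventually_lt_nhds h)
      have heq : (f ∘ c) =ᶠ[nhds t] (f ∘ fun s => 1 + α s) := by
        filter_upwards [hev] with s hs
        simp [Function.comp, hc s, abs_of_neg hs, sub_neg_eq_add]
      exact ((hf.comp (contDiff_const.add hαs)).contDiffAt).congr_of_eventuallyEq heq
    · have hct : c t = 1 := by rw [hc t, h, abs_zero, sub_zero]
      have hev : ∀ᶠ s in nhds t, c s ∈ Metric.ball (1 : ℝ) δ := by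
        have := hcc.continuousAt (x := t) (Metric.ball_mem_nhds (c t) hδ)
        rwa [hct] at this
      have heq : (f ∘ c) =ᶠ[nhds t] fun _ => f 1 := by
        filter_upwards [hev] with s hs
        exact hball _ hs
      exact contDiffAt_const.congr_of_eventuallyEq heq
    · have hev : ∀ᶠ s in nhds t, 0 < α s :=
        (hαs.continuous.tendsto t).eventually (eventually_gt_nhds h)
      have heq : (f ∘ c) =ᶠ[nhds t] (f ∘ fun s => 1 - α s) := by
        filter_upwards [hev] with s hs
        simp [Function.comp, hc s, abs_of_pos hs]
      exact ((hf.comp (contDiff_const.sub hαs)).contDiffAt).congr_of_eventuallyEq heq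
  · intro hdiff
    have hmem : Ioo (-(1 / 4) : ℝ) (1 / 4) ∈ nhds (0 : ℝ) :=
      Ioo_mem_nhds (by norm_num) (by norm_num)
    have heq : c =ᶠ[nhds (0 : ℝ)] fun t => 1 - |t| := by
      filter_upwards [hmem] with s hs
      rw [hc s, hαid s hs]
    have h1 : DifferentiableAt ℝ (fun t : ℝ => 1 - |t|) 0 :=
      hdiff.congr_of_eventuallyEq heq.symm
    have h2 : DifferentiableAt ℝ (fun t : ℝ => |t|) 0 := by
      have := (differentiableAt_const (1 : ℝ)).sub h1
      simpa using this
    exact not_differentiableAt_abs_zero h2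
end

section
/- The map t ↦ t/2 is not a smooth map of the flattened unit interval 𝐈 to itself: there exists a structure curve c on 𝐈 (namely c(t) = 1 − |α(t)| with α as in the standard example) and a structure function h on 𝐈 such that h ∘ (t ↦ t/2) ∘ c is not differentiable at t = 0. -/
open Set Real

/-- Generating functions of the flattened unit interval `𝐈`: smooth functions on `[0,1]`
constant within distance `ε < 1/4` of each endpoint. -/
def flatGen : Set (ℝ → ℝ) :=
  {f | ContDiff ℝ (⊤ : ℕ∞) f ∧
    ∃ ε ∈ Ioo (0 : ℝ) (1 / 4),
      (∀ x ∈ Icc (0 : ℝ) 1, x < ε → f x = f 0) ∧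
      (∀ x ∈ Icc (0 : ℝ) 1, 1 - ε < x → f x = f 1)}

/-- Structure curves of `𝐈`. -/
def flatCurves : Set (ℝ → ℝ) :=
  {c | (∀ t, c t ∈ Icc (0 : ℝ) 1) ∧ ∀ f ∈ flatGen, ContDiff ℝ (⊤ : ℕ∞) (f ∘ c)}

/-- Structure functions of `𝐈`. -/
def flatFunctions : Set (ℝ → ℝ) :=
  {h | ∀ c ∈ flatCurves, ContDiff ℝ (⊤ : ℕ∞) (h ∘ c)}


noncomputable def myh : ℝ → ℝ :=
  fun x => x * smoothTransition (8 * x - 1) * smoothTransition (7 - 8 * x)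

noncomputable def myc : ℝ → ℝ := fun t => 1 - |t| / (1 + t ^ 2)

lemma abs_le_half (t : ℝ) : |t| / (1 + t ^ 2) ≤ 1 / 2 := by
  rw [div_le_div_iff₀ (by positivity) (by norm_num)]
  nlinarith [sq_nonneg (|t| - 1), sq_abs t]

lemma myc_mem (t : ℝ) : myc t ∈ Icc (0 : ℝ) 1 := by
  have h1 := abs_le_half t
  have h2 : (0:ℝ) ≤ |t| / (1 + t ^ 2) := by positivity
  simp only [myc, mem_Icc]
  constructor <;> linarith

lemma myh_gen : myh ∈ flatGen := by
  refine ⟨?_, 1/8, by norm_num, ?_, ?_⟩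
  · exact (contDiff_id.mul (smoothTransition.contDiff.comp (by fun_prop))).mul
      (smoothTransition.contDiff.comp (by fun_prop))
  · intro x hx hlt
    have : smoothTransition (8 * x - 1) = 0 :=
      smoothTransition.zero_of_nonpos (by linarith)
    simp [myh, this]
  · intro x hx hlt
    have b : smoothTransition (-1 : ℝ) = 0 :=
      smoothTransition.zero_of_nonpos (by norm_num)
    have : smoothTransition (7 - 8 * x) = 0 :=
      smoothTransition.zero_of_nonpos (by linarith)
    simp only [myh, this, mul_zero]
    norm_num [b]

lemma myh_mid {x : ℝ} (h1 : 1/4 ≤ x) (h2 : x ≤ 3/4) : myh x = x := by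
  have a : smoothTransition (8 * x - 1) = 1 :=
    smoothTransition.one_of_one_le (by linarith)
  have b : smoothTransition (7 - 8 * x) = 1 :=
    smoothTransition.one_of_one_le (by linarith)
  simp [myh, a, b]

lemma myc_curve : myc ∈ flatCurves := by
  refine ⟨myc_mem, ?_⟩
  intro f hf
  obtain ⟨hsm, ε, hε, h0, h1⟩ := hf
  rw [contDiff_iff_contDiffAt]
  intro t
  rcases lt_trichotomy t 0 with ht | ht | ht
  · have : (f ∘ myc) =ᶠ[nhds t] fun s => f (1 + s / (1 + s ^ 2)) := by
      filter_upwards [eventually_lt_nhds ht] with s hs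
      simp [Function.comp, myc, abs_of_neg hs]
      ring_nf
    refine ContDiffAt.congr_of_eventuallyEq ?_ this
    exact hsm.contDiffAt.comp t (by fun_prop (disch := positivity))
  · subst ht
    have : (f ∘ myc) =ᶠ[nhds 0] fun _ => f 1 := by
      have : ∀ᶠ s in nhds (0:ℝ), |s| < ε := by
        filter_upwards [Metric.ball_mem_nhds (0:ℝ) hε.1] with s hs
        simpa [Real.dist_eq] using hs
      filter_upwards [this] with s hs
      have hle : |s| / (1 + s ^ 2) ≤ |s| := by
        apply div_le_self (abs_nonneg s); nlinarith [sq_nonneg s]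
      exact h1 (myc s) (myc_mem s) (by simp only [myc]; linarith)
    refine ContDiffAt.congr_of_eventuallyEq contDiffAt_const this
  · have : (f ∘ myc) =ᶠ[nhds t] fun s => f (1 - s / (1 + s ^ 2)) := by
      filter_upwards [eventually_gt_nhds ht] with s hs
      simp [Function.comp, myc, abs_of_pos hs]
    refine ContDiffAt.congr_of_eventuallyEq ?_ this
    exact hsm.contDiffAt.comp t (by fun_prop (disch := positivity))

/-- `t ↦ t/2` is not smooth as a map `𝐈 → 𝐈`: there are a structure curve `c` and a
structure function `h` on `𝐈` such that `h ∘ (·/2) ∘ c` is not differentiable at `0`. -/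
theorem half_not_smooth_on_flattened_interval :
    ∃ c ∈ flatCurves, ∃ h ∈ flatFunctions,
      ¬ DifferentiableAt ℝ (h ∘ (fun s : ℝ => s / 2) ∘ c) 0 := by
  refine ⟨myc, myc_curve, myh, fun c hc => hc.2 myh myh_gen, ?_⟩
  intro hdiff
  have heq : (myh ∘ (fun s : ℝ => s / 2) ∘ myc) = fun t => (1 - |t| / (1 + t ^ 2)) / 2 := by
    funext t
    have h1 := abs_le_half t
    have h2 : (0:ℝ) ≤ |t| / (1 + t ^ 2) := by positivity
    simp only [Function.comp, myc]
    rw [myh_mid (by linarith) (by linarith)]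
  rw [heq] at hdiff
  have habs : DifferentiableAt ℝ (fun t : ℝ => |t|) 0 := by
    have h3 : DifferentiableAt ℝ (fun t : ℝ => |t| / (1 + t ^ 2)) 0 := by
      have := hdiff.const_mul (-2)
      have h4 : DifferentiableAt ℝ (fun t : ℝ => (-2) * ((1 - |t| / (1 + t ^ 2)) / 2) + 1) 0 :=
        this.add_const 1
      convert h4 using 2 with t
      ring
    have h5 : DifferentiableAt ℝ (fun t : ℝ => |t| / (1 + t ^ 2) * (1 + t ^ 2)) 0 :=
      h3.mul (by fun_prop)
    convert h5 using 2 with t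
    field_simp
  exact not_differentiableAt_abs_zero habs
end

section
/- The square root map s : [0,1] → [0,1], s(t) = √t, becomes smooth as a map 𝐈 → 𝐈 of the flattened unit interval to itself: for every structure curve c on 𝐈 and every generating function f on 𝐈 (smooth on [0,1] and constant near 0 and near 1), the composite f ∘ s ∘ c is C^∞ on ℝ. -/
open Set

/-- `f ∘ √` is again a generating function. -/
theorem sqrt_comp_mem_flatGen {f : ℝ → ℝ} (hf : f ∈ flatGen) :
    (f ∘ fun x : ℝ => Real.sqrt x) ∈ flatGen := by
  obtain ⟨hsm, ε, ⟨hε0, hε4⟩, h0, h1⟩ := hf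
  refine ⟨?_, ε ^ 2, ⟨by positivity, ?_⟩, ?_, ?_⟩
  · rw [contDiff_iff_contDiffAt]
    intro x
    rcases lt_or_ge x (ε ^ 2) with h | h
    · apply ContDiffAt.congr_of_eventuallyEq (contDiffAt_const (c := f 0))
      filter_upwards [Iio_mem_nhds h] with y hy
      have hse : Real.sqrt y < ε := by
        rcases le_or_gt y 0 with hy0 | hy0
        · rw [Real.sqrt_eq_zero'.mpr hy0]; exact hε0
        · have := Real.sqrt_lt_sqrt hy0.le hy
          rwa [Real.sqrt_sq hε0.le] at this
      simpa using h0 _ ⟨Real.sqrt_nonneg y, by linarith⟩ hse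
    · have hx0 : x ≠ 0 := (lt_of_lt_of_le (by positivity) h).ne'
      exact (hsm.contDiffAt).comp x (Real.contDiffAt_sqrt hx0)
  · nlinarith
  · intro x hx hxe
    simp only [Function.comp_apply, Real.sqrt_zero]
    apply h0 _ ⟨Real.sqrt_nonneg x, Real.sqrt_le_one.2 hx.2⟩
    have : Real.sqrt x < Real.sqrt (ε ^ 2) := by
      apply Real.sqrt_lt_sqrt hx.1 hxe
    rwa [Real.sqrt_sq hε0.le] at this
  · intro x hx hxe
    simp only [Function.comp_apply, Real.sqrt_one]
    apply h1 _ ⟨Real.sqrt_nonneg x, Real.sqrt_le_one.2 hx.2⟩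
    have hxs : x ≤ Real.sqrt x := by
      nlinarith [Real.sq_sqrt hx.1, Real.sqrt_nonneg x, Real.sqrt_le_one.2 hx.2]
    nlinarith

/-- The square root map is smooth as a map `𝐈 → 𝐈`: for every structure curve `c` and
every generating function `f` of `𝐈`, the composite `f ∘ √ ∘ c` is C^∞ on `ℝ`. -/
theorem sqrt_smooth_on_flattened_interval :
    ∀ c ∈ flatCurves, ∀ f ∈ flatGen,
      ContDiff ℝ (⊤ : ℕ∞) (f ∘ (fun x : ℝ => Real.sqrt x) ∘ c) := by
  intro c hc f hf
  exact hc.2 _ (sqrt_comp_mem_flatGen hf)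
end

section
/- Let α : ℝ → ℝ be a smooth braking function with α(t) = 0 for t < 1/4, α(t) = 1 for t > 3/4, and 0 ≤ α ≤ 1. Define H(t,s) = (1 − α(t))·s on [0,1] × [0,1]. Then for every structure curve v ↦ (t(v), s(v)) on 𝐈 × 𝐈⁻ (t a structure curve on the flattened interval 𝐈, s a structure curve on the left flattened interval 𝐈⁻) and every generating function f on 𝐈⁻ (smooth on [0,1] and constant near 0), the composite v ↦ f((1 − α(t(v)))·s(v)) is C^∞ on ℝ. -/
open Set

/-- The homotopy `H(t,s) = (1 - α(t))·s` is smooth as a map `𝐈 × 𝐈⁻ → 𝐈⁻`: for every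
structure curve `v ↦ (t v, s v)` on `𝐈 × 𝐈⁻` and every generating function `f` of `𝐈⁻`
(smooth and constant near `0`), the composite `v ↦ f ((1 - α (t v)) * s v)` is C^∞. -/
theorem homotopy_smooth_flattened
    (α : ℝ → ℝ) (hαs : ContDiff ℝ (⊤ : ℕ∞) α)
    (hα0 : ∀ t, t < (1 / 4 : ℝ) → α t = 0)
    (hα1 : ∀ t, (3 / 4 : ℝ) < t → α t = 1)
    (hαr : ∀ t, α t ∈ Icc (0 : ℝ) 1)
    (t s : ℝ → ℝ)
    (htc : Continuous t) (htr : ∀ v, t v ∈ Icc (0 : ℝ) 1)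
    (hts : ∀ v, t v ∈ Ioo (0 : ℝ) 1 → ContDiffAt ℝ (⊤ : ℕ∞) t v)
    (hsc : Continuous s) (hsr : ∀ v, s v ∈ Icc (0 : ℝ) 1)
    (hss : ∀ v, s v ∈ Ioc (0 : ℝ) 1 → ContDiffAt ℝ (⊤ : ℕ∞) s v)
    (f : ℝ → ℝ) (hf : ContDiff ℝ (⊤ : ℕ∞) f)
    (hfconst : ∃ δ > 0, ∀ x, x < δ → f x = f 0) :
    ContDiff ℝ (⊤ : ℕ∞) (fun v => f ((1 - α (t v)) * s v)) := by
  obtain ⟨δ, hδ, hfc⟩ := hfconst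
  set g : ℝ → ℝ := fun v => (1 - α (t v)) * s v with hg
  have hgc : Continuous g := by
    exact (continuous_const.sub (hαs.continuous.comp htc)).mul hsc
  rw [contDiff_iff_contDiffAt]
  intro v
  by_cases hcase : g v < δ
  · -- locally constant
    have hev : ∀ᶠ w in nhds v, g w < δ := hgc.continuousAt.eventually_lt continuousAt_const hcase
    have : (fun w => f (g w)) =ᶠ[nhds v] (fun _ => f 0) := by
      filter_upwards [hev] with w hw
      exact hfc _ hw
    exact (contDiffAt_const (c := f 0)).congr_of_eventuallyEq this
  · push_neg at hcase
    -- g v ≥ δ > 0, so 1 - α(t v) > 0 and s v > 0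
    have hαle : α (t v) < 1 := by
      by_contra h
      push_neg at h
      have h1 : α (t v) = 1 := le_antisymm (hαr (t v)).2 h
      have : g v = 0 := by simp [hg, h1]
      linarith
    have htv : t v ≤ 3 / 4 := by
      by_contra h
      push_neg at h
      exact absurd (hα1 _ h) (ne_of_lt hαle)
    have hA1 : 1 - α (t v) ≤ 1 := by have := (hαr (t v)).1; linarith
    have hsv : 0 < s v := by
      by_contra h
      push_neg at h
      have : g v ≤ 0 :=
        mul_nonpos_of_nonneg_of_nonpos (by linarith) h
      linarith
    have hsd : ContDiffAt ℝ (⊤ : ℕ∞) s v := hss v ⟨hsv, (hsr v).2⟩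
    have hαt : ContDiffAt ℝ (⊤ : ℕ∞) (fun w => α (t w)) v := by
      rcases eq_or_lt_of_le (htr v).1 with h0 | h0
      · -- t v = 0: α ∘ t is locally 0
        have hev : ∀ᶠ w in nhds v, t w < 1 / 4 := by
          have : t v < 1 / 4 := by rw [← h0]; norm_num
          exact htc.continuousAt.eventually_lt continuousAt_const this
        have : (fun w => α (t w)) =ᶠ[nhds v] (fun _ => (0 : ℝ)) := by
          filter_upwards [hev] with w hw
          exact hα0 _ hw
        exact (contDiffAt_const (c := (0:ℝ))).congr_of_eventuallyEq this
      · exact (hαs.contDiffAt).comp v (hts v ⟨h0, lt_of_le_of_lt htv (by norm_num)⟩)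
    exact hf.contDiffAt.comp v ((contDiffAt_const.sub hαt).mul hsd)
end

section
/- With u, β, α_ε, H as in the SNDR representation for (𝐈, {0,1}) — H(t,s) = (1 − α_ε(t))·s + α_ε(t)·β(s) — the map H is smooth as a map 𝐈 × 𝐈 → 𝐈: for every structure curve c on 𝐈 × 𝐈 and every generating function f on 𝐈 (smooth on [0,1], constant near 0 and near 1), f ∘ H ∘ c is C^∞ on ℝ. In particular if s is near 0 then H(t,s) is near 0 uniformly in t, and if s is near 1 then H(t,s) is near 1 uniformly in t. -/
open Set

/-- `H(t,s) = (1 - α_ε(t))·s + α_ε(t)·β(s)` is smooth as a map `𝐈 × 𝐈 → 𝐈`: composing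
with any structure curve of `𝐈 × 𝐈` and any generating function of `𝐈` yields a C^∞
function; moreover `H(t,s)` is uniformly near `0` when `s` is near `0` and uniformly
near `1` when `s` is near `1`. -/
theorem SNDR_interval_homotopy_smooth
    (ε : ℝ) (hε : ε ∈ Ioo (0 : ℝ) (1 / 4))
    (β αe : ℝ → ℝ)
    (hβs : ContDiff ℝ (⊤ : ℕ∞) β)
    (hβr : ∀ s ∈ Icc (0 : ℝ) 1, β s ∈ Icc (0 : ℝ) 1)
    (hβ0 : ∀ s ∈ Icc (0 : ℝ) (1 / 4), β s = 0)
    (hβ1 : ∀ s ∈ Icc (3 / 4 : ℝ) 1, β s = 1)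
    (hαs : ContDiff ℝ (⊤ : ℕ∞) αe)
    (hαr : ∀ t ∈ Icc (0 : ℝ) 1, αe t ∈ Icc (0 : ℝ) 1)
    (hα0 : ∀ t ∈ Icc (0 : ℝ) ε, αe t = 0)
    (hα1 : ∀ t ∈ Icc (1 - ε : ℝ) 1, αe t = 1)
    (H : ℝ → ℝ → ℝ)
    (hH : ∀ t s, H t s = (1 - αe t) * s + αe t * β s) :
    -- smoothness of H as a map 𝐈 × 𝐈 → 𝐈
    (∀ t s : ℝ → ℝ,
      Continuous t → (∀ v, t v ∈ Icc (0 : ℝ) 1) →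
      (∀ v, t v ∈ Ioo (0 : ℝ) 1 → ContDiffAt ℝ (⊤ : ℕ∞) t v) →
      Continuous s → (∀ v, s v ∈ Icc (0 : ℝ) 1) →
      (∀ v, s v ∈ Ioo (0 : ℝ) 1 → ContDiffAt ℝ (⊤ : ℕ∞) s v) →
      ∀ f : ℝ → ℝ, ContDiff ℝ (⊤ : ℕ∞) f →
        (∃ δ ∈ Ioo (0 : ℝ) (1 / 4),
          (∀ x ∈ Icc (0 : ℝ) 1, x < δ → f x = f 0) ∧
          (∀ x ∈ Icc (0 : ℝ) 1, 1 - δ < x → f x = f 1)) →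
        ContDiff ℝ (⊤ : ℕ∞) (fun v => f (H (t v) (s v)))) ∧
    -- H(t,s) is near 0 uniformly in t when s is near 0
    (∀ δ > (0 : ℝ), ∃ η > (0 : ℝ), ∀ t ∈ Icc (0 : ℝ) 1, ∀ s ∈ Icc (0 : ℝ) 1,
      s < η → H t s < δ) ∧
    -- H(t,s) is near 1 uniformly in t when s is near 1
    (∀ δ > (0 : ℝ), ∃ η > (0 : ℝ), ∀ t ∈ Icc (0 : ℝ) 1, ∀ s ∈ Icc (0 : ℝ) 1,
      1 - η < s → 1 - δ < H t s) := by

  obtain ⟨hε0, hε1⟩ := hε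
  -- H maps [0,1]×[0,1] into [0,1]
  have hHr : ∀ t ∈ Icc (0:ℝ) 1, ∀ s ∈ Icc (0:ℝ) 1, H t s ∈ Icc (0:ℝ) 1 := by
    intro t ht s hs
    have ha := hαr t ht
    have hb := hβr s hs
    rw [hH]
    constructor
    · have h1 : 0 ≤ (1 - αe t) * s := mul_nonneg (by linarith [ha.2]) hs.1
      have h2 : 0 ≤ αe t * β s := mul_nonneg ha.1 hb.1
      linarith
    · nlinarith [ha.1, ha.2, hs.1, hs.2, hb.1, hb.2]
  refine ⟨?_, ?_, ?_⟩
  · intro t s htc htr hts hsc hsr hss f hf ⟨δ, hδ, hf0, hf1⟩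
    rw [contDiff_iff_contDiffAt]
    intro v
    have hsv := hsr v
    rcases eq_or_lt_of_le hsv.1 with h0 | h0
    · -- s v = 0 : locally constant
      have hm : (0:ℝ) < min δ (1/4) := lt_min hδ.1 (by norm_num)
      have hev : ∀ᶠ v' in nhds v, s v' < min δ (1/4) := by
        have : s v < min δ (1/4) := by rw [← h0]; exact hm
        exact (hsc.continuousAt).eventually_lt continuousAt_const this
      refine (contDiffAt_const (c := f 0)).congr_of_eventuallyEq ?_
      filter_upwards [hev] with v' hv'
      have hsv' := hsr v'
      have hβz : β (s v') = 0 := hβ0 _ ⟨hsv'.1, le_of_lt (lt_of_lt_of_le hv' (min_le_right _ _))⟩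
      have ha := hαr _ (htr v')
      have hHle : H (t v') (s v') ≤ s v' := by
        rw [hH, hβz, mul_zero, add_zero]
        nlinarith [ha.1, hsv'.1]
      have hHmem := hHr _ (htr v') _ hsv'
      exact hf0 _ hHmem (lt_of_le_of_lt hHle (lt_of_lt_of_le hv' (min_le_left _ _)))
    rcases eq_or_lt_of_le hsv.2 with h1 | h1
    · -- s v = 1 : locally constant
      have hm : (0:ℝ) < min δ (1/4) := lt_min hδ.1 (by norm_num)
      have hev : ∀ᶠ v' in nhds v, 1 - min δ (1/4) < s v' := by
        have : (1:ℝ) - min δ (1/4) < s v := by rw [h1]; linarith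
        exact continuousAt_const.eventually_lt (hsc.continuousAt) this
      refine (contDiffAt_const (c := f 1)).congr_of_eventuallyEq ?_
      filter_upwards [hev] with v' hv'
      have hsv' := hsr v'
      have hβo : β (s v') = 1 := by
        refine hβ1 _ ⟨?_, hsv'.2⟩
        have : min δ (1/4) ≤ 1/4 := min_le_right _ _
        linarith
      have ha := hαr _ (htr v')
      have hHge : s v' ≤ H (t v') (s v') := by
        rw [hH, hβo, mul_one]; nlinarith [ha.1, hsv'.2]
      have hHmem := hHr _ (htr v') _ hsv'
      refine hf1 _ hHmem ?_
      have : min δ (1/4) ≤ δ := min_le_left _ _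
      linarith
    -- now s v ∈ Ioo 0 1, so s is smooth at v
    have hssm := hss v ⟨h0, h1⟩
    have htv := htr v
    rcases eq_or_lt_of_le htv.1 with g0 | g0
    · -- t v = 0 : locally H = s
      have hev : ∀ᶠ v' in nhds v, t v' < ε := by
        have : t v < ε := by rw [← g0]; exact hε0
        exact (htc.continuousAt).eventually_lt continuousAt_const this
      refine ((hf.contDiffAt).comp v hssm).congr_of_eventuallyEq ?_
      filter_upwards [hev] with v' hv'
      have hαz : αe (t v') = 0 := hα0 _ ⟨(htr v').1, le_of_lt hv'⟩
      simp [hH, hαz]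
    rcases eq_or_lt_of_le htv.2 with g1 | g1
    · -- t v = 1 : locally H = β ∘ s
      have hev : ∀ᶠ v' in nhds v, 1 - ε < t v' := by
        have : (1:ℝ) - ε < t v := by rw [g1]; linarith
        exact continuousAt_const.eventually_lt (htc.continuousAt) this
      refine ((hf.contDiffAt).comp v ((hβs.contDiffAt).comp v hssm)).congr_of_eventuallyEq ?_
      filter_upwards [hev] with v' hv'
      have hαo : αe (t v') = 1 := hα1 _ ⟨le_of_lt hv', (htr v').2⟩
      simp [hH, hαo]
    · -- interior case: everything smooth
      have htsm := hts v ⟨g0, g1⟩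
      have hmain : ContDiffAt ℝ (⊤ : ℕ∞)
          (fun v' => (1 - αe (t v')) * s v' + αe (t v') * β (s v')) v := by
        exact ((contDiffAt_const.sub ((hαs.contDiffAt).comp v htsm)).mul hssm).add
          (((hαs.contDiffAt).comp v htsm).mul ((hβs.contDiffAt).comp v hssm))
      have : ContDiffAt ℝ (⊤ : ℕ∞)
          (fun v' => f ((1 - αe (t v')) * s v' + αe (t v') * β (s v'))) v :=
        (hf.contDiffAt).comp v hmain
      exact this.congr_of_eventuallyEq (Filter.Eventually.of_forall fun v' => by simp only [hH])
  · -- near 0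
    intro δ hδ
    refine ⟨min δ (1/4), lt_min hδ (by norm_num), ?_⟩
    intro t ht s hs hsδ
    have ha := hαr t ht
    have hβz : β s = 0 := hβ0 _ ⟨hs.1, le_of_lt (lt_of_lt_of_le hsδ (min_le_right _ _))⟩
    rw [hH, hβz, mul_zero, add_zero]
    have : (1 - αe t) * s ≤ s := by nlinarith [ha.1, hs.1]
    have : s < δ := lt_of_lt_of_le hsδ (min_le_left _ _)
    nlinarith [ha.1, hs.1]
  · -- near 1
    intro δ hδ
    refine ⟨min δ (1/4), lt_min hδ (by norm_num), ?_⟩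
    intro t ht s hs hsδ
    have ha := hαr t ht
    have hβo : β s = 1 := by
      refine hβ1 _ ⟨?_, hs.2⟩
      have : min δ (1/4) ≤ 1/4 := min_le_right _ _
      linarith
    rw [hH, hβo, mul_one]
    have h1 : min δ (1/4) ≤ δ := min_le_left _ _
    nlinarith [ha.1, hs.2]
end

section
/- Let i : A → X be a smooth map of Frölicher spaces such that for every homotopy G : I × A → Z with G(0,·) = f ∘ i extending smoothly over X (in the weakened sense with reparametrized homotopy G′(t,a) = G(α_ε(t),a)), an extension F : I × X → Z exists. Then every smooth function f : A → ℝ factors through i: there exists a smooth f̃ : X → ℝ with f = f̃ ∘ i. Consequently a smooth cofibration is an initial morphism in the category of Frölicher spaces. -/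
open Set Filter

/-- A Frölicher space: a set with mutually saturated families of curves and functions. -/
structure FrolicherSpace (X : Type) where
  curves : Set (ℝ → X)
  functions : Set (X → ℝ)
  compat : ∀ f ∈ functions, ∀ c ∈ curves, ContDiff ℝ (⊤ : ℕ∞) (f ∘ c)
  sat_fun : ∀ f : X → ℝ, (∀ c ∈ curves, ContDiff ℝ (⊤ : ℕ∞) (f ∘ c)) → f ∈ functions
  sat_curve : ∀ c : ℝ → X, (∀ f ∈ functions, ContDiff ℝ (⊤ : ℕ∞) (f ∘ c)) → c ∈ curves

/-- The Frölicher structure generated by a set `F0` of functions. -/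
def FrolicherSpace.gen {X : Type} (F0 : Set (X → ℝ)) : FrolicherSpace X where
  curves := {c | ∀ f ∈ F0, ContDiff ℝ (⊤ : ℕ∞) (f ∘ c)}
  functions := {f | ∀ c : ℝ → X,
    (∀ g ∈ F0, ContDiff ℝ (⊤ : ℕ∞) (g ∘ c)) → ContDiff ℝ (⊤ : ℕ∞) (f ∘ c)}
  compat := fun f hf c hc => hf c hc
  sat_fun := fun _ h c hc => h c hc
  sat_curve := fun c h f hf => h f (fun c' hc' => hc' f hf)

/-- Smooth maps of Frölicher spaces. -/
def IsSmoothMap {X Y : Type} (FX : FrolicherSpace X) (FY : FrolicherSpace Y)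
    (φ : X → Y) : Prop :=
  ∀ f ∈ FY.functions, (f ∘ φ) ∈ FX.functions

/-- The product of two Frölicher spaces. -/
def FrolicherSpace.prod {X Y : Type} (FX : FrolicherSpace X) (FY : FrolicherSpace Y) :
    FrolicherSpace (X × Y) :=
  FrolicherSpace.gen ({f | ∃ g ∈ FX.functions, f = g ∘ Prod.fst} ∪
    {f | ∃ g ∈ FY.functions, f = g ∘ Prod.snd})

/-- The subspace structure on a subset of a Frölicher space. -/
def FrolicherSpace.sub {X : Type} (FX : FrolicherSpace X) (S : Set X) :
    FrolicherSpace S :=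
  FrolicherSpace.gen {f | ∃ g ∈ FX.functions, ∀ x : S, f x = g ↑x}

/-- The underlying set of the unit interval. -/
abbrev UI : Type := ↥(Set.Icc (0 : ℝ) 1)

/-- `0` as a point of the unit interval. -/
def uzero : UI := ⟨0, by norm_num⟩

/-- `1` as a point of the unit interval. -/
def uone : UI := ⟨1, by norm_num⟩

/-- The usual unit interval `I` (subspace structure of `ℝ`). -/
def intervalF : FrolicherSpace UI :=
  FrolicherSpace.gen {f | ∃ g : ℝ → ℝ, ContDiff ℝ (⊤ : ℕ∞) g ∧ ∀ x : UI, f x = g ↑x}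

/-- The left flattened unit interval `𝐈⁻`: generated by the smooth functions on `[0,1]`
that are constant near `0`. -/
def IminusF : FrolicherSpace UI :=
  FrolicherSpace.gen {f | (∃ g : ℝ → ℝ, ContDiff ℝ (⊤ : ℕ∞) g ∧ ∀ x : UI, f x = g ↑x) ∧
    ∃ δ > (0 : ℝ), ∀ x : UI, (x : ℝ) < δ → f x = f uzero}

/-!
Apply the extension property to the homotopy `G(t, a) = t · f(a)`, which starts at the zero
function on `X`. The braking function fixes `1`, so the end `F(1, ·)` of the extension restricts
to `f` along `i`. Initiality follows because the curves of `A` are determined by its functions,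
each of which now has the form `f̃ ∘ i`.
-/

def FrolicherSpace.real : FrolicherSpace ℝ := FrolicherSpace.gen {id}

namespace FrolicherSpace

variable {A X Y : Type}

theorem mem_gen_functions_of_mem {F0 : Set (X → ℝ)} {f : X → ℝ} (hf : f ∈ F0) :
    f ∈ (gen F0).functions :=
  fun _ hc => hc f hf

theorem const_mem_functions (FX : FrolicherSpace X) (r : ℝ) : (fun _ => r) ∈ FX.functions :=
  FX.sat_fun _ fun _ _ => contDiff_const

theorem mul_mem_functions (FX : FrolicherSpace X) {f g : X → ℝ} (hf : f ∈ FX.functions)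
    (hg : g ∈ FX.functions) : f * g ∈ FX.functions :=
  FX.sat_fun _ fun c hc => (FX.compat f hf c hc).mul (FX.compat g hg c hc)

theorem comp_fst_mem_prod_functions (FX : FrolicherSpace X) (FY : FrolicherSpace Y)
    {f : X → ℝ} (hf : f ∈ FX.functions) : f ∘ Prod.fst ∈ (FX.prod FY).functions :=
  mem_gen_functions_of_mem (Or.inl ⟨f, hf, rfl⟩)

theorem comp_snd_mem_prod_functions (FX : FrolicherSpace X) (FY : FrolicherSpace Y)
    {f : Y → ℝ} (hf : f ∈ FY.functions) : f ∘ Prod.snd ∈ (FX.prod FY).functions :=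
  mem_gen_functions_of_mem (Or.inr ⟨f, hf, rfl⟩)

theorem comp_mk_mem_functions (FX : FrolicherSpace X) (FY : FrolicherSpace Y)
    {F : X × Y → ℝ} (hF : F ∈ (FX.prod FY).functions) (x : X) :
    (fun y => F (x, y)) ∈ FY.functions :=
  FY.sat_fun _ fun c hc => hF (fun s => (x, c s)) <| by
    rintro g (⟨g, -, rfl⟩ | ⟨g, hg, rfl⟩)
    · exact contDiff_const (c := g x)
    · exact FY.compat g hg c hc

theorem isSmoothMap_real_iff (FX : FrolicherSpace X) {φ : X → ℝ} :
    IsSmoothMap FX real φ ↔ φ ∈ FX.functions :=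
  ⟨fun h => h id (mem_gen_functions_of_mem rfl), fun hφ _ hg =>
    FX.sat_fun _ fun c hc => hg (φ ∘ c) (by rintro _ rfl; exact FX.compat φ hφ c hc)⟩

theorem curves_eq_of_forall_factor (FA : FrolicherSpace A) (FX : FrolicherSpace X) {i : A → X}
    (hi : IsSmoothMap FA FX i) (hfac : ∀ f ∈ FA.functions, ∃ ft ∈ FX.functions, f = ft ∘ i) :
    FA.curves = {c : ℝ → A | ∀ g ∈ FX.functions, ContDiff ℝ (⊤ : ℕ∞) (g ∘ i ∘ c)} := by
  ext c
  refine ⟨fun hc g hg => FA.compat _ (hi g hg) c hc, fun hc => FA.sat_curve c fun f hf => ?_⟩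
  obtain ⟨ft, hft, rfl⟩ := hfac f hf
  exact hc ft hft

end FrolicherSpace

open FrolicherSpace

theorem coe_mem_intervalF : (fun t : UI => (t : ℝ)) ∈ intervalF.functions :=
  mem_gen_functions_of_mem ⟨id, contDiff_id, fun _ => rfl⟩

/-- The weakened homotopy extension property: on `A`, the extension `F` only has to agree with `G`
reparametrized by a braking function `α`. -/
def IsSmoothCofibration {A X : Type} (FA : FrolicherSpace A) (FX : FrolicherSpace X)
    (i : A → X) : Prop :=
  ∀ (Z : Type) (FZ : FrolicherSpace Z) (f : X → Z) (G : UI × A → Z),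
    IsSmoothMap FX FZ f →
    IsSmoothMap (intervalF.prod FA) FZ G →
    (∀ a, G (uzero, a) = f (i a)) →
    ∃ (F : UI × X → Z) (α : ℝ → ℝ) (ε : ℝ)
      (hmem : ∀ t : UI, α ↑t ∈ Set.Icc (0 : ℝ) 1),
      ε ∈ Set.Ioo (0 : ℝ) (1 / 2) ∧
      ContDiff ℝ (⊤ : ℕ∞) α ∧
      (∀ t, t ≤ ε → α t = 0) ∧
      (∀ t, 1 - ε ≤ t → α t = 1) ∧
      IsSmoothMap (intervalF.prod FX) FZ F ∧
      (∀ x, F (uzero, x) = f x) ∧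
      (∀ (t : UI) (a : A), F (t, i a) = G (⟨α ↑t, hmem t⟩, a))

theorem IsSmoothCofibration.exists_factor {A X : Type} {FA : FrolicherSpace A}
    {FX : FrolicherSpace X} {i : A → X} (hcof : IsSmoothCofibration FA FX i) {f : A → ℝ}
    (hf : f ∈ FA.functions) : ∃ ft ∈ FX.functions, f = ft ∘ i := by
  let G : UI × A → ℝ := fun p => (p.1 : ℝ) * f p.2
  have hG : IsSmoothMap (intervalF.prod FA) real G :=
    (isSmoothMap_real_iff _).2 <| mul_mem_functions _
      (comp_fst_mem_prod_functions _ _ coe_mem_intervalF) (comp_snd_mem_prod_functions _ _ hf)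
  have hzero : IsSmoothMap FX real fun _ => 0 :=
    (isSmoothMap_real_iff _).2 (const_mem_functions _ 0)
  obtain ⟨F, α, ε, hmem, hε, -, -, hα1, hF, -, hFi⟩ :=
    hcof ℝ real (fun _ => 0) G hzero hG fun a => zero_mul (f a)
  have hα : α 1 = 1 := hα1 1 (by linarith [hε.1])
  refine ⟨fun x => F (uone, x), comp_mk_mem_functions _ _ ((isSmoothMap_real_iff _).1 hF) uone,
    funext fun a => ?_⟩
  simp [hFi, G, uone, hα]

/-- If `i : A → X` has the (weakened) smooth homotopy extension property — every smooth
homotopy `G : I × A → Z` with `G(0,·) = f ∘ i` extends to `F : I × X → Z` satisfying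
`F(0,·) = f` and `F ∘ (1 × i) = G'` where `G'(t,a) = G(α_ε t, a)` for some braking
function `α_ε` — then every smooth function `f : A → ℝ` factors through `i`, and
consequently `i` is an initial morphism: the curves of `A` are exactly those whose
composite with `i` is smooth in `X`. -/
theorem cofibration_initial
    (A X : Type) (FA : FrolicherSpace A) (FX : FrolicherSpace X)
    (i : A → X) (hi : IsSmoothMap FA FX i)
    (hcof : ∀ (Z : Type) (FZ : FrolicherSpace Z) (f : X → Z) (G : UI × A → Z),
      IsSmoothMap FX FZ f →
      IsSmoothMap (intervalF.prod FA) FZ G →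
      (∀ a, G (uzero, a) = f (i a)) →
      ∃ (F : UI × X → Z) (α : ℝ → ℝ) (ε : ℝ)
        (hmem : ∀ t : UI, α ↑t ∈ Set.Icc (0 : ℝ) 1),
        ε ∈ Set.Ioo (0 : ℝ) (1 / 2) ∧
        ContDiff ℝ (⊤ : ℕ∞) α ∧
        (∀ t, t ≤ ε → α t = 0) ∧
        (∀ t, 1 - ε ≤ t → α t = 1) ∧
        IsSmoothMap (intervalF.prod FX) FZ F ∧
        (∀ x, F (uzero, x) = f x) ∧
        (∀ (t : UI) (a : A), F (t, i a) = G (⟨α ↑t, hmem t⟩, a))) :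
    (∀ f ∈ FA.functions, ∃ ft ∈ FX.functions, f = ft ∘ i) ∧
    FA.curves = {c : ℝ → A | ∀ g ∈ FX.functions, ContDiff ℝ (⊤ : ℕ∞) (g ∘ i ∘ c)} := by
  have hfac : ∀ f ∈ FA.functions, ∃ ft ∈ FX.functions, f = ft ∘ i :=
    fun _ hf => IsSmoothCofibration.exists_factor hcof hf
  exact ⟨hfac, curves_eq_of_forall_factor FA FX hi hfac⟩
end

section
/- A smooth map i : A → X of Frölicher spaces is a smooth cofibration if and only if the subset (0 × X) ∪ (𝐈⁻ × i(A)) is a smooth retract of 𝐈⁻ × X, i.e. there is a smooth map r : 𝐈⁻ × X → (0 × X) ∪ (𝐈⁻ × i(A)) with r ∘ j = id, where j is the inclusion. Moreover i is a cofibration with the first coordinate independence property (FCIP) iff the retraction r may be chosen to have the FCIP with respect to i. -/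
open Set Filter

/-- The corner `(0 × X) ∪ (𝐈⁻ × i(A))` inside `𝐈⁻ × X`. -/
def corner {A X : Type} (i : A → X) : Set (UI × X) :=
  {p | p.1 = uzero ∨ p.2 ∈ Set.range i}

/-- The set `Λ(x, S)` of entry points of a curve `x` into `S`. -/
def Lam {X : Type} (x : ℝ → X) (S : Set X) : Set ℝ :=
  {s | x s ∈ S ∧ ∃ u : ℕ → ℝ, Tendsto u atTop (nhds s) ∧ ∀ n, x (u n) ∉ S}

/-- The first coordinate independence property (FCIP) of a map `g : 𝐈⁻ × X → Y` with
respect to a subset `S ⊆ X` (the image of `i`). -/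
def HasFCIP {X Y : Type} (FX : FrolicherSpace X) (FY : FrolicherSpace Y)
    (S : Set X) (g : UI × X → Y) : Prop :=
  ∀ h ∈ FY.functions, ∀ (t : ℝ → ℝ) (x : ℝ → X) (ht : ∀ v, t v ∈ Set.Icc (0 : ℝ) 1),
    x ∈ FX.curves →
    (∀ ε > (0 : ℝ),
      ContDiffOn ℝ (⊤ : ℕ∞) t (⋃ s₀ ∈ Lam x S, Set.Icc (s₀ - ε) (s₀ + ε))ᶜ) →
    ContDiff ℝ (⊤ : ℕ∞) (fun v => h (g (⟨t v, ht v⟩, x v)))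

/-- `i` is a smooth cofibration: every smooth map on `(0 × X) ∪ (𝐈⁻ × i(A))` extends to
a smooth map on `𝐈⁻ × X`. -/
def IsCofibration {A X : Type} (FX : FrolicherSpace X) (i : A → X) : Prop :=
  ∀ (Z : Type) (FZ : FrolicherSpace Z) (h : ↥(corner i) → Z),
    IsSmoothMap ((IminusF.prod FX).sub (corner i)) FZ h →
    ∃ G : UI × X → Z, IsSmoothMap (IminusF.prod FX) FZ G ∧
      ∀ p : ↥(corner i), G ↑p = h p

/-- `i` is a smooth cofibration with the FCIP: the extension can always be chosen to
have the FCIP with respect to `i`. -/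
def IsCofibrationFCIP {A X : Type} (FX : FrolicherSpace X) (i : A → X) : Prop :=
  ∀ (Z : Type) (FZ : FrolicherSpace Z) (h : ↥(corner i) → Z),
    IsSmoothMap ((IminusF.prod FX).sub (corner i)) FZ h →
    ∃ G : UI × X → Z, IsSmoothMap (IminusF.prod FX) FZ G ∧
      HasFCIP FX FZ (Set.range i) G ∧
      ∀ p : ↥(corner i), G ↑p = h p

/-- A smooth retraction of `𝐈⁻ × X` onto the corner `(0 × X) ∪ (𝐈⁻ × i(A))`. -/
def IsCornerRetraction {A X : Type} (FX : FrolicherSpace X) (i : A → X)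
    (r : UI × X → ↥(corner i)) : Prop :=
  IsSmoothMap (IminusF.prod FX) ((IminusF.prod FX).sub (corner i)) r ∧
    ∀ p : ↥(corner i), r ↑p = p

/-- A smooth map `i : A → X` is a smooth cofibration iff `(0 × X) ∪ (𝐈⁻ × i(A))` is a
smooth retract of `𝐈⁻ × X`; and `i` is a cofibration with the FCIP iff the retraction
can be chosen to have the FCIP with respect to `i`. -/
theorem cofibration_iff_corner_retract
    (A X : Type) (FA : FrolicherSpace A) (FX : FrolicherSpace X)
    (i : A → X) (hi : IsSmoothMap FA FX i) :
    (IsCofibration FX i ↔ ∃ r, IsCornerRetraction FX i r) ∧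
    (IsCofibrationFCIP FX i ↔ ∃ r, IsCornerRetraction FX i r ∧
      HasFCIP FX ((IminusF.prod FX).sub (corner i)) (Set.range i) r) := by
  constructor
  · constructor
    · intro hc
      obtain ⟨G, hG, hGp⟩ := hc (↥(corner i)) ((IminusF.prod FX).sub (corner i)) id
        (fun f hf => hf)
      exact ⟨G, hG, hGp⟩
    · rintro ⟨r, hrsm, hrid⟩ Z FZ h hh
      refine ⟨fun p => h (r p), fun f hf => hrsm _ (hh f hf), fun p => by show h (r ↑p) = h p; rw [hrid p]⟩
  · constructor
    · intro hc
      obtain ⟨G, hG, hGF, hGp⟩ := hc (↥(corner i)) ((IminusF.prod FX).sub (corner i)) id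
        (fun f hf => hf)
      exact ⟨G, ⟨hG, hGp⟩, hGF⟩
    · rintro ⟨r, ⟨hrsm, hrid⟩, hrF⟩ Z FZ h hh
      refine ⟨fun p => h (r p), fun f hf => hrsm _ (hh f hf), ?_, fun p => by show h (r ↑p) = h p; rw [hrid p]⟩
      intro h' hh' t x ht hx hct
      exact hrF (h' ∘ h) (hh h' hh') t x ht hx hct
end
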